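/- Let D be a strongly connected digraph with at least 2 vertices. Then ⟨D⟩ contains every constant transformation of the vertex set, i.e. for every vertex t the map sending every vertex to t belongs to ⟨D⟩. -/

import Mathlib

/-- The transformation of `{1,…,n}` sending `a` to `b` and fixing all other points. -/
def arcT {n : ℕ} (a b : Fin n) : Fin n → Fin n := fun v => if v = a then b else v

/-- The semigroup `⟨D⟩` generated by the arcs of the digraph `D`; transformations act on
the right, so a product `ε₁ε₂⋯ε_k` is the function `ε_k ∘ ⋯ ∘ ε₁`. -/
def genSg {n : ℕ} (D : Set (Fin n × Fin n)) : Set (Fin n → Fin n) :=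
  { α | ∃ l : List (Fin n × Fin n), l ≠ [] ∧ (∀ p ∈ l, p ∈ D) ∧
      α = l.foldl (fun f p => arcT p.1 p.2 ∘ f) id }

/-- The product `x·y` in the right-action convention: apply `x` first, then `y`. -/
def sgMul {n : ℕ} (x y : Fin n → Fin n) : Fin n → Fin n := y ∘ x

/-- The right ideal `xS¹ = {x} ∪ xS`. -/
def rIdeal {n : ℕ} (S : Set (Fin n → Fin n)) (x : Fin n → Fin n) : Set (Fin n → Fin n) :=
  insert x { y | ∃ s ∈ S, y = sgMul x s }

/-- The left ideal `S¹x = {x} ∪ Sx`. -/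
def lIdeal {n : ℕ} (S : Set (Fin n → Fin n)) (x : Fin n → Fin n) : Set (Fin n → Fin n) :=
  insert x { y | ∃ s ∈ S, y = sgMul s x }

/-- The two-sided ideal `S¹xS¹`. -/
def jIdeal {n : ℕ} (S : Set (Fin n → Fin n)) (x : Fin n → Fin n) : Set (Fin n → Fin n) :=
  { y | ∃ s ∈ insert id S, ∃ t ∈ insert id S, y = sgMul s (sgMul x t) }

def RRel {n : ℕ} (S : Set (Fin n → Fin n)) (x y : Fin n → Fin n) : Prop :=
  rIdeal S x = rIdeal S y

def LRel {n : ℕ} (S : Set (Fin n → Fin n)) (x y : Fin n → Fin n) : Prop :=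
  lIdeal S x = lIdeal S y

def JRel {n : ℕ} (S : Set (Fin n → Fin n)) (x y : Fin n → Fin n) : Prop :=
  jIdeal S x = jIdeal S y

def RTrivial {n : ℕ} (S : Set (Fin n → Fin n)) : Prop :=
  ∀ x ∈ S, ∀ y ∈ S, RRel S x y → x = y

def LTrivial {n : ℕ} (S : Set (Fin n → Fin n)) : Prop :=
  ∀ x ∈ S, ∀ y ∈ S, LRel S x y → x = y

def HTrivial {n : ℕ} (S : Set (Fin n → Fin n)) : Prop :=
  ∀ x ∈ S, ∀ y ∈ S, RRel S x y → LRel S x y → x = y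

def JTrivial {n : ℕ} (S : Set (Fin n → Fin n)) : Prop :=
  ∀ x ∈ S, ∀ y ∈ S, JRel S x y → x = y

/-- `α` has a cycle of length `k`: `k` distinct points `a₀,…,a_{k-1}` with
`α(aᵢ) = a_{i+1 mod k}`. -/
def IsCycleOf {n : ℕ} (α : Fin n → Fin n) (k : ℕ) : Prop :=
  0 < k ∧ ∃ a : ZMod k → Fin n, Function.Injective a ∧ ∀ i, α (a i) = a (i + 1)

/-- `l(D)`: the maximal length of a cycle of an element of `⟨D⟩`. -/
noncomputable def lD {n : ℕ} (D : Set (Fin n × Fin n)) : ℕ :=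
  sSup { k | ∃ α ∈ genSg D, IsCycleOf α k }

/-- The arc set of a graph. -/
def arcsOf {n : ℕ} (G : SimpleGraph (Fin n)) : Set (Fin n × Fin n) :=
  { p | G.Adj p.1 p.2 }

/-- `l(G)` for a graph `G`. -/
noncomputable def lG {n : ℕ} (G : SimpleGraph (Fin n)) : ℕ := lD (arcsOf G)

/-- Reachability along directed walks of `D`. -/
def dreach {n : ℕ} (D : Set (Fin n × Fin n)) : Fin n → Fin n → Prop :=
  Relation.ReflTransGen (fun a b => (a, b) ∈ D)

/-- The strong component of the vertex `v`. -/
def strongComp {n : ℕ} (D : Set (Fin n × Fin n)) (v : Fin n) : Set (Fin n) :=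
  { u | dreach D u v ∧ dreach D v u }

/-- The underlying graph of the digraph `D`. -/
def underlying {n : ℕ} (D : Set (Fin n × Fin n)) : SimpleGraph (Fin n) where
  Adj a b := a ≠ b ∧ ((a, b) ∈ D ∨ (b, a) ∈ D)
  symm := ⟨fun a b h => ⟨h.1.symm, h.2.symm⟩⟩
  loopless := ⟨fun a h => h.1 rfl⟩

/-- `v 0, v 1, …, v r` is a cycle of the digraph `D`. -/
def IsDCycle {n : ℕ} (D : Set (Fin n × Fin n)) (r : ℕ) (v : ℕ → Fin n) : Prop :=
  1 ≤ r ∧ v r = v 0 ∧ (∀ i < r, ∀ j < r, v i = v j → i = j) ∧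
    ∀ i < r, (v i, v (i + 1)) ∈ D

def HasDCycle {n : ℕ} (D : Set (Fin n × Fin n)) : Prop := ∃ r v, IsDCycle D r v

def DAcyclic {n : ℕ} (D : Set (Fin n × Fin n)) : Prop := ¬ HasDCycle D

/-- `G` is a subgroup contained in the transformation semigroup `S`. -/
def IsSubgroupIn {n : ℕ} (S G : Set (Fin n → Fin n)) : Prop :=
  G ⊆ S ∧ (∀ x ∈ G, ∀ y ∈ G, sgMul x y ∈ G) ∧
    ∃ e ∈ G, (∀ x ∈ G, sgMul e x = x ∧ sgMul x e = x) ∧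
      ∀ x ∈ G, ∃ y ∈ G, sgMul x y = e ∧ sgMul y x = e

/-- Every subgroup of `S` is trivial. -/
def SgAperiodic {n : ℕ} (S : Set (Fin n → Fin n)) : Prop :=
  ∀ G, IsSubgroupIn S G → G.Subsingleton

/-
Right-multiplying by the arcs of a directed path `x = a₀ → a₁ → ⋯ → a_r = y` gives an element of
`⟨D⟩` that sends `x` to `y` and every other point either to itself or to `y`. Composing an
element `f` of `⟨D⟩` with such a path from a value `f v ≠ t` to `t` strictly shrinks the set of
points not sent to `t`, so repeating this from any element of `⟨D⟩` reaches the constant map `t`.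
With at least two vertices, such a path between two distinct vertices provides a starting element.
-/

section GenSg

variable {n : ℕ} {D : Set (Fin n × Fin n)}

lemma foldl_arcT_comp (l : List (Fin n × Fin n)) (g : Fin n → Fin n) :
    l.foldl (fun f p => arcT p.1 p.2 ∘ f) g = l.foldl (fun f p => arcT p.1 p.2 ∘ f) id ∘ g := by
  induction l generalizing g with
  | nil => rfl
  | cons p l ih => simp only [List.foldl_cons, ih (arcT p.1 p.2 ∘ g), ih (arcT p.1 p.2 ∘ id)]; rfl

lemma comp_mem_genSg {f g : Fin n → Fin n} (hf : f ∈ genSg D) (hg : g ∈ genSg D) :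
    g ∘ f ∈ genSg D := by
  obtain ⟨l, hl, hlD, rfl⟩ := hf
  obtain ⟨l', -, hl'D, rfl⟩ := hg
  refine ⟨l ++ l', by simp [hl], fun p hp => ?_, ?_⟩
  · exact (List.mem_append.1 hp).elim (hlD p) (hl'D p)
  · rw [List.foldl_append, foldl_arcT_comp l' (List.foldl _ id l)]

lemma arcT_mem_genSg {a b : Fin n} (h : (a, b) ∈ D) : arcT a b ∈ genSg D :=
  ⟨[(a, b)], List.cons_ne_nil _ _, by simpa using h, rfl⟩

lemma exists_mem_genSg_collapse {x y : Fin n} (hxy : dreach D x y) (hne : x ≠ y) :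
    ∃ g ∈ genSg D, g x = y ∧ ∀ z, g z = z ∨ g z = y := by
  have h := (Relation.reflTransGen_iff_eq_or_transGen.1 hxy).resolve_left hne.symm
  clear hxy hne
  induction h using Relation.TransGen.head_induction_on with
  | @single a hay =>
    refine ⟨_, arcT_mem_genSg hay, if_pos rfl, fun z => ?_⟩
    by_cases hz : z = a <;> simp [arcT, hz]
  | @head a c hac _ ih =>
    obtain ⟨g, hg, hgc, hgz⟩ := ih
    refine ⟨g ∘ arcT a c, comp_mem_genSg (arcT_mem_genSg hac) hg, by simpa [arcT] using hgc,
      fun z => ?_⟩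
    by_cases hz : z = a
    · simp [arcT, hz, hgc]
    · simpa [arcT, hz] using hgz z

lemma const_mem_genSg_of_mem (hsc : ∀ u v : Fin n, u ≠ v → dreach D u v) (t : Fin n)
    {f : Fin n → Fin n} (hf : f ∈ genSg D) : (fun _ => t) ∈ genSg D := by
  induction hk : (Finset.univ.filter (f · ≠ t)).card using Nat.strong_induction_on
    generalizing f with
  | _ k ih =>
    by_cases hconst : ∀ v, f v = t
    · rwa [← funext hconst]
    obtain ⟨v, hv⟩ := not_forall.1 hconst
    obtain ⟨g, hg, hgv, hgz⟩ := exists_mem_genSg_collapse (hsc _ _ hv) hv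
    have hsub : Finset.univ.filter (fun w => g (f w) ≠ t) ⊂ Finset.univ.filter (f · ≠ t) := by
      refine Finset.ssubset_iff_of_subset (fun w => ?_) |>.2 ⟨v, by simpa using hv, by simp [hgv]⟩
      simp only [Finset.mem_filter, Finset.mem_univ, true_and]
      exact fun hgw hfw => (hgz (f w)).elim (fun h => hgw (h.trans hfw)) hgw
    exact ih _ (hk ▸ Finset.card_lt_card hsub) (comp_mem_genSg hf hg) rfl

end GenSg

theorem stmt17_general (n : ℕ) (hn : 2 ≤ n) (D : Set (Fin n × Fin n))
    (hsc : ∀ u v : Fin n, u ≠ v → dreach D u v) :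
    ∀ t : Fin n, (fun _ => t) ∈ genSg D := by
  intro t
  have h01 : (⟨0, by omega⟩ : Fin n) ≠ ⟨1, by omega⟩ := by simp
  obtain ⟨g, hg, -⟩ := exists_mem_genSg_collapse (hsc _ _ h01) h01
  exact const_mem_genSg_of_mem hsc t hg

/-- If `D` is strongly connected with at least two vertices, then
`⟨D⟩` contains every constant transformation. -/
theorem stmt17 (n : ℕ) (hn : 2 ≤ n) (D : Set (Fin n × Fin n))
    (hloop : ∀ u : Fin n, (u, u) ∉ D)
    (hsc : ∀ u v : Fin n, u ≠ v → dreach D u v) :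
    ∀ t : Fin n, (fun _ => t) ∈ genSg D :=
  stmt17_general n hn D hsc
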